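/- For any primitive integer vector u in Z^2 (i.e., gcd of coordinates is 1) and any ε > 0, there exists a primitive integer vector v in Z^2 such that the cross product u × v = u₁v₂ - u₂v₁ equals 1 and the angle between u and v is less than ε. -/

import Mathlib

/-!
Bézout gives one vector `w` with `u × w = 1`, and then `u × (w + n u) = 1` for every `n`.
As `n → ∞` the direction of `w + n u` tends to that of `u`, so the angle tends to `0`.
A vector with cross product `1` against anything is automatically primitive.
-/

open InnerProductGeometry Filter Topology

theorem InnerProductGeometry.tendsto_angle_add_smul_atTop {E : Type*}
    [NormedAddCommGroup E] [InnerProductSpace ℝ E] {x : E} (hx : x ≠ 0) (w : E) :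
    Tendsto (fun t : ℝ => angle x (w + t • x)) atTop (𝓝 0) := by
  have hscale : ∀ᶠ t : ℝ in atTop, angle x (t⁻¹ • w + x) = angle x (w + t • x) := by
    filter_upwards [eventually_gt_atTop 0] with t ht
    rw [← angle_smul_right_of_pos x (w + t • x) (inv_pos.mpr ht), smul_add, smul_smul,
      inv_mul_cancel₀ ht.ne', one_smul]
  have hlim : Tendsto (fun t : ℝ => t⁻¹ • w + x) atTop (𝓝 x) := by
    have := (tendsto_inv_atTop_zero (𝕜 := ℝ)).smul_const w |>.add_const x
    rwa [zero_smul, zero_add] at this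
  have hcont : Tendsto (fun y => angle x y) (𝓝 x) (𝓝 0) := by
    have hpair : ContinuousAt (fun y : E => (x, y)) x := by fun_prop
    rw [← angle_self hx]
    exact ((continuousAt_angle (x := (x, x)) hx hx).comp hpair).tendsto
  exact (hcont.comp hlim).congr' hscale

theorem Int.gcd_eq_one_of_mul_sub_mul_eq_one {a b c d : ℤ} (h : a * d - b * c = 1) :
    Int.gcd c d = 1 :=
  Int.isCoprime_iff_gcd_eq_one.mp ⟨-b, a, by linear_combination h⟩

theorem EuclideanSpace.equiv_symm_vecTwo_add_smul (a b c d r : ℝ) :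
    ((WithLp.equiv 2 (Fin 2 → ℝ)).symm ![a + r * c, b + r * d] : EuclideanSpace ℝ (Fin 2)) =
      (WithLp.equiv 2 (Fin 2 → ℝ)).symm ![a, b] + r • (WithLp.equiv 2 (Fin 2 → ℝ)).symm ![c, d] := by
  ext i
  fin_cases i <;> simp

theorem EuclideanSpace.equiv_symm_vecTwo_ne_zero {a b : ℝ} (h : a ≠ 0 ∨ b ≠ 0) :
    ((WithLp.equiv 2 (Fin 2 → ℝ)).symm ![a, b] : EuclideanSpace ℝ (Fin 2)) ≠ 0 := by
  rw [Ne, WithLp.equiv_symm_apply, WithLp.toLp_eq_zero, Matrix.cons_eq_zero_iff,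
    Matrix.cons_eq_zero_iff]
  tauto

/-- For any primitive integer vector `u` in `ℤ²` and any `ε > 0`,
there is a primitive integer vector `v` with cross product `u × v = 1` and
angle between `u` and `v` less than `ε`. -/
theorem stmt_0 (u : ℤ × ℤ) (hu : Int.gcd u.1 u.2 = 1) (ε : ℝ) (hε : 0 < ε) :
    ∃ v : ℤ × ℤ, Int.gcd v.1 v.2 = 1 ∧ u.1 * v.2 - u.2 * v.1 = 1 ∧
      InnerProductGeometry.angle
        ((WithLp.equiv 2 (Fin 2 → ℝ)).symm ![(u.1 : ℝ), (u.2 : ℝ)] : EuclideanSpace ℝ (Fin 2))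
        ((WithLp.equiv 2 (Fin 2 → ℝ)).symm ![(v.1 : ℝ), (v.2 : ℝ)]) < ε := by
  obtain ⟨a, b, hab⟩ := Int.isCoprime_iff_gcd_eq_one.mpr hu
  have hu0 : (u.1 : ℝ) ≠ 0 ∨ (u.2 : ℝ) ≠ 0 := by
    rw [Int.cast_ne_zero, Int.cast_ne_zero, ← not_and_or]
    rintro ⟨h1, h2⟩
    simp [h1, h2] at hu
  obtain ⟨n, hn⟩ := (((tendsto_angle_add_smul_atTop (EuclideanSpace.equiv_symm_vecTwo_ne_zero hu0)
    ((WithLp.equiv 2 (Fin 2 → ℝ)).symm ![(-b : ℝ), (a : ℝ)])).comp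
    tendsto_natCast_atTop_atTop).eventually (gt_mem_nhds hε)).exists
  have hcross : u.1 * (a + n * u.2) - u.2 * (-b + n * u.1) = 1 := by linear_combination hab
  refine ⟨(-b + n * u.1, a + n * u.2), Int.gcd_eq_one_of_mul_sub_mul_eq_one hcross, hcross, ?_⟩
  push_cast
  rwa [EuclideanSpace.equiv_symm_vecTwo_add_smul]
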